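/- arXiv:2504.03658 — 3 statements merged into one kernel-verified Lean document; each statement's English description precedes it below -/
import Mathlib

section
/- Let ℓ_1 ≥ ⋯ ≥ ℓ_μ and let N^{(Ec)} be the elementary column-type matrix with superdiagonal blocks [I_{ℓ_{i+1}}; 0]; let ℓ'_i := ℓ_{μ+1−i} (so ℓ'_1 ≤ ⋯ ≤ ℓ'_μ) and let N^{(Er)} be the elementary row-type matrix for the partition (ℓ'_1,…,ℓ'_μ) with superdiagonal blocks [0 I_{ℓ'_i}]. Then there exists a permutation matrix P with P·N^{(Ec)}·Pᵀ = N^{(Er)}; in particular N^{(Ec)} and N^{(Er)} are similar and have equal ranks of all powers. -/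
open Matrix

/-- The elementary column-type matrix N^{(Ec)}: zero except for the
superdiagonal blocks [I_{ℓ_{i+1}}; 0] ∈ ℝ^{ℓ_i × ℓ_{i+1}}. -/
def Nec (μ : ℕ) (ℓ : ℕ → ℕ) :
    Matrix (Σ i : Fin μ, Fin (ℓ i)) (Σ i : Fin μ, Fin (ℓ i)) ℝ :=
  Matrix.of fun p q =>
    if (q.1 : ℕ) = (p.1 : ℕ) + 1 ∧ (p.2 : ℕ) = (q.2 : ℕ) then 1 else 0

/-- The elementary row-type matrix N^{(Er)}: zero except for the
superdiagonal blocks [0 I_{ℓ_i}] ∈ ℝ^{ℓ_i × ℓ_{i+1}}. -/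
def Ner (μ : ℕ) (ℓ : ℕ → ℕ) :
    Matrix (Σ i : Fin μ, Fin (ℓ i)) (Σ i : Fin μ, Fin (ℓ i)) ℝ :=
  Matrix.of fun p q =>
    if (q.1 : ℕ) = (p.1 : ℕ) + 1 ∧
        (q.2 : ℕ) = (ℓ (q.1 : ℕ) - ℓ (p.1 : ℕ)) + (p.2 : ℕ) then 1 else 0

/-!
Both matrices are nilpotent "shift" matrices whose Jordan chains are indexed by the column
position `j` inside a block. In `Nec` the chain of `j` runs through the first `c j` blocks,
where `c j = #{t | j < ℓ t}` is the conjugate partition. Reversing each block of `Ner`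
turns it into `Nec` for the increasing sizes `ℓ (μ - 1 - i)`, whose chain of `j` runs through
the last `c j` blocks; shifting column `j` by `μ - c j` blocks matches the two chain structures.
-/

lemma reindex_eq_of_apply_apply {m n α : Type*} (e : m ≃ n) {A : Matrix m m α}
    {B : Matrix n n α} (h : ∀ p q, B (e p) (e q) = A p q) : reindex e e A = B := by
  ext p q
  simp [← h]

lemma rank_reindex_pow {m n R : Type*} [Fintype m] [Fintype n] [DecidableEq m] [DecidableEq n]
    [CommSemiring R] (e : m ≃ n) (A : Matrix m m R) (k : ℕ) :
    (reindex e e A ^ k).rank = (A ^ k).rank := by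
  rw [← coe_reindexAlgEquiv R R, ← map_pow, coe_reindexAlgEquiv, rank_reindex]

lemma Sigma.fin_ext {n : ℕ} {F : Fin n → ℕ} {p q : Σ i : Fin n, Fin (F i)}
    (h₁ : (p.1 : ℕ) = q.1) (h₂ : (p.2 : ℕ) = q.2) : p = q :=
  Sigma.ext (Fin.ext h₁) ((Fin.heq_ext_iff (congrArg F (Fin.ext h₁))).2 h₂)

section Blocks

variable {μ : ℕ} {ℓ : ℕ → ℕ}

def blockRev (μ : ℕ) (ℓ : ℕ → ℕ) : (Σ i : Fin μ, Fin (ℓ i)) ≃ (Σ i : Fin μ, Fin (ℓ i)) :=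
  Equiv.sigmaCongrRight fun _ => Fin.revPerm

theorem reindex_blockRev_Ner (hmono : ∀ i, i + 1 < μ → ℓ i ≤ ℓ (i + 1)) :
    reindex (blockRev μ ℓ) (blockRev μ ℓ) (Ner μ ℓ) = Nec μ ℓ := by
  refine reindex_eq_of_apply_apply _ ?_
  rintro ⟨⟨i, hi⟩, ⟨j, hj⟩⟩ ⟨⟨a, ha⟩, ⟨b, hb⟩⟩
  simp only at hj hb
  simp only [blockRev, Ner, Nec, of_apply, Equiv.sigmaCongrRight_apply, Fin.revPerm_apply,
    Fin.val_rev, Fin.val_mk]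
  refine if_congr ⟨fun ⟨hai, _⟩ => ⟨hai, ?_⟩, fun ⟨hai, _⟩ => ⟨hai, ?_⟩⟩ rfl rfl <;>
    · subst hai
      have := hmono i ha
      omega

lemma antitone_of_succ_le_of_lt (hmono : ∀ i, i + 1 < μ → ℓ (i + 1) ≤ ℓ i) {s t : ℕ}
    (hst : s ≤ t) (ht : t < μ) : ℓ t ≤ ℓ s := by
  induction t, hst using Nat.le_induction with
  | base => rfl
  | succ n _ ih => exact (hmono n ht).trans (ih (by omega))

def conjugatePart (μ : ℕ) (ℓ : ℕ → ℕ) (j : ℕ) : ℕ :=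
  ((Finset.range μ).filter (fun t => j < ℓ t)).card

lemma conjugatePart_le (j : ℕ) : conjugatePart μ ℓ j ≤ μ :=
  (Finset.card_filter_le _ _).trans (Finset.card_range μ).le

lemma lt_iff_lt_conjugatePart (hmono : ∀ i, i + 1 < μ → ℓ (i + 1) ≤ ℓ i) {j t : ℕ}
    (ht : t < μ) : j < ℓ t ↔ t < conjugatePart μ ℓ j := by
  constructor
  · intro h
    have hsub : Finset.range (t + 1) ⊆ (Finset.range μ).filter (fun s => j < ℓ s) :=
      fun s hs => by
        simp only [Finset.mem_range, Finset.mem_filter] at hs ⊢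
        exact ⟨by omega, h.trans_le (antitone_of_succ_le_of_lt hmono (by omega) ht)⟩
    simpa [conjugatePart] using Finset.card_le_card hsub
  · intro h
    by_contra! hle
    have hsub : (Finset.range μ).filter (fun s => j < ℓ s) ⊆ Finset.range t :=
      fun s hs => by
        simp only [Finset.mem_range, Finset.mem_filter] at hs ⊢
        by_contra! hts
        exact (antitone_of_succ_le_of_lt hmono hts hs.1).not_gt (hle.trans_lt hs.2)
    exact h.not_ge (by simpa [conjugatePart] using Finset.card_le_card hsub)

def shiftEquiv (hmono : ∀ i, i + 1 < μ → ℓ (i + 1) ≤ ℓ i) :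
    (Σ i : Fin μ, Fin (ℓ i)) ≃ (Σ i : Fin μ, Fin (ℓ (μ - 1 - i))) where
  toFun p :=
    have := (lt_iff_lt_conjugatePart hmono p.1.2).1 p.2.2
    have := conjugatePart_le (μ := μ) (ℓ := ℓ) p.2
    ⟨⟨p.1 + (μ - conjugatePart μ ℓ p.2), by omega⟩,
      ⟨p.2, (lt_iff_lt_conjugatePart hmono
        (t := μ - 1 - (p.1 + (μ - conjugatePart μ ℓ p.2))) (by omega)).2 (by omega)⟩⟩
  invFun q :=
    have := (lt_iff_lt_conjugatePart hmono (by omega)).1 q.2.2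
    ⟨⟨q.1 - (μ - conjugatePart μ ℓ q.2), by omega⟩,
      ⟨q.2, (lt_iff_lt_conjugatePart hmono
        (t := q.1 - (μ - conjugatePart μ ℓ q.2)) (by omega)).2 (by omega)⟩⟩
  left_inv p := by
    have := (lt_iff_lt_conjugatePart hmono p.1.2).1 p.2.2
    exact Sigma.fin_ext (by simp only; omega) rfl
  right_inv q := by
    have := (lt_iff_lt_conjugatePart hmono (by omega)).1 q.2.2
    have := conjugatePart_le (μ := μ) (ℓ := ℓ) q.2
    exact Sigma.fin_ext (by simp only; omega) rfl

theorem reindex_shiftEquiv_Nec (hmono : ∀ i, i + 1 < μ → ℓ (i + 1) ≤ ℓ i) :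
    reindex (shiftEquiv hmono) (shiftEquiv hmono) (Nec μ ℓ) =
      Nec μ (fun i => ℓ (μ - 1 - i)) := by
  refine reindex_eq_of_apply_apply _ ?_
  rintro ⟨⟨i, hi⟩, ⟨j, hj⟩⟩ ⟨⟨a, ha⟩, ⟨b, hb⟩⟩
  have := (lt_iff_lt_conjugatePart hmono hi).1 hj
  have := (lt_iff_lt_conjugatePart hmono ha).1 hb
  have := conjugatePart_le (μ := μ) (ℓ := ℓ) j
  simp only [shiftEquiv, Nec, of_apply, Equiv.coe_fn_mk]
  refine if_congr ⟨fun ⟨_, hjb⟩ => ⟨?_, hjb⟩, fun ⟨_, hjb⟩ => ⟨?_, hjb⟩⟩ rfl rfl <;>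
    · subst hjb
      omega

end Blocks

theorem stmt12_general (μ : ℕ) (ℓ : ℕ → ℕ)
    (hmono : ∀ i, i + 1 < μ → ℓ (i + 1) ≤ ℓ i) :
    ∃ e : (Σ i : Fin μ, Fin (ℓ i)) ≃ (Σ i : Fin μ, Fin (ℓ (μ - 1 - i))),
      Matrix.reindex e e (Nec μ ℓ) = Ner μ (fun i => ℓ (μ - 1 - i)) ∧
      ∀ k : ℕ, ((Nec μ ℓ) ^ k).rank = ((Ner μ (fun i => ℓ (μ - 1 - i))) ^ k).rank := by
  have hinc : ∀ i, i + 1 < μ → ℓ (μ - 1 - i) ≤ ℓ (μ - 1 - (i + 1)) := fun i hi => by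
    have := hmono (μ - 1 - (i + 1)) (by omega)
    rwa [show μ - 1 - (i + 1) + 1 = μ - 1 - i by omega] at this
  set rev := blockRev μ (fun i => ℓ (μ - 1 - i))
  have hsim : reindex ((shiftEquiv hmono).trans rev.symm) ((shiftEquiv hmono).trans rev.symm)
      (Nec μ ℓ) = Ner μ (fun i => ℓ (μ - 1 - i)) := by
    change reindex rev.symm rev.symm (reindex (shiftEquiv hmono) (shiftEquiv hmono) (Nec μ ℓ)) = _
    rw [reindex_shiftEquiv_Nec, ← reindex_blockRev_Ner hinc, ← reindex_symm,
      Equiv.symm_apply_apply]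
  refine ⟨_, hsim, fun k => ?_⟩
  rw [← hsim, rank_reindex_pow]

/-- N^{(Ec)} (for ℓ_1 ≥ ⋯ ≥ ℓ_μ) and N^{(Er)} (for the reversed partition)
are permutation-similar; in particular all their powers have equal rank. -/
theorem stmt12 (μ : ℕ) (ℓ : ℕ → ℕ)
    (hpos : ∀ i, i < μ → 0 < ℓ i)
    (hmono : ∀ i, i + 1 < μ → ℓ (i + 1) ≤ ℓ i) :
    ∃ e : (Σ i : Fin μ, Fin (ℓ i)) ≃ (Σ i : Fin μ, Fin (ℓ (μ - 1 - i))),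
      Matrix.reindex e e (Nec μ ℓ) = Ner μ (fun i => ℓ (μ - 1 - i)) ∧
      ∀ k : ℕ, ((Nec μ ℓ) ^ k).rank = ((Ner μ (fun i => ℓ (μ - 1 - i))) ^ k).rank :=
  stmt12_general μ ℓ hmono
end

section
/- Let ℓ_1 ≥ ⋯ ≥ ℓ_μ and N^{(Ec)} the elementary column-type nilpotent matrix. Then the Jordan normal form of N^{(Ec)} consists exactly of ℓ_i − ℓ_{i+1} Jordan blocks of order i for i = 1,…,μ−1 (with the convention that these counts refer to nilpotent Jordan blocks), and ℓ_μ Jordan blocks of order μ; i.e., N^{(Ec)} is permutation-similar to this Jordan matrix. -/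
/-!
`N^{(Ec)}` shifts the basis vector in row `i + 1`, column `j` of the Young diagram of `ℓ` to the
one in row `i`, column `j`, and kills row `0`. So each column of the diagram is a Jordan chain,
and the block sizes are the column lengths, i.e. the conjugate partition of `ℓ`; a column has
length exactly `k` iff its index lies in `[ℓ k, ℓ (k - 1))`.
-/

open Matrix

/-- The nilpotent Jordan matrix with blocks of sizes s 0, …, s (n−1). -/
def JordanNil {n : ℕ} (s : Fin n → ℕ) :
    Matrix (Σ i : Fin n, Fin (s i)) (Σ i : Fin n, Fin (s i)) ℝ :=
  Matrix.of fun p q =>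
    if p.1 = q.1 ∧ (q.2 : ℕ) = (p.2 : ℕ) + 1 then 1 else 0

open Finset

theorem Fin.card_filter_val_mem_Ico {m a b : ℕ} (hb : b ≤ m) :
    #{j : Fin m | (j : ℕ) ∈ Ico a b} = b - a := by
  rw [← Nat.card_Ico, ← card_map valEmbedding]
  congr 1
  ext x
  simp only [mem_map, mem_filter, mem_univ, true_and, valEmbedding_apply]
  exact ⟨by rintro ⟨j, hj, rfl⟩; exact hj, fun hx => ⟨⟨x, (mem_Ico.mp hx).2.trans_le hb⟩, hx, rfl⟩⟩

theorem antitone_fin_val_of_succ_le {α : Type*} [Preorder α] {μ : ℕ} {ℓ : ℕ → α}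
    (h : ∀ i, i + 1 < μ → ℓ (i + 1) ≤ ℓ i) : Antitone fun i : Fin μ => ℓ i := by
  cases μ with
  | zero => exact fun i => i.elim0
  | succ n => exact Fin.antitone_iff_succ_le.mpr fun i => h i (by omega)

/-- The conjugate of the partition `ℓ 0 ≥ ⋯ ≥ ℓ (μ - 1)`: the length of its `j`-th column. -/
def conjPart (μ : ℕ) (ℓ : ℕ → ℕ) (j : ℕ) : ℕ := #{i : Fin μ | j < ℓ i}

section Conjugate

variable {μ : ℕ} {ℓ : ℕ → ℕ}

theorem conjPart_le (j : ℕ) : conjPart μ ℓ j ≤ μ :=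
  (card_filter_le _ _).trans (card_fin μ).le

theorem lt_conjPart_iff (hℓ : Antitone fun i : Fin μ => ℓ i) (i : Fin μ) {j : ℕ} :
    (i : ℕ) < conjPart μ ℓ j ↔ j < ℓ i :=
  Tuple.lt_card_gt_iff_apply_gt_of_antitone hℓ

theorem conjPart_eq_iff (hℓ : Antitone fun i : Fin μ => ℓ i) {k j : ℕ} (hk : 1 ≤ k)
    (hkμ : k < μ) : conjPart μ ℓ j = k ↔ j ∈ Ico (ℓ k) (ℓ (k - 1)) := by
  have hk₀ := lt_conjPart_iff hℓ ⟨k, hkμ⟩ (j := j)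
  have hk₁ := lt_conjPart_iff hℓ ⟨k - 1, by omega⟩ (j := j)
  simp only at hk₀ hk₁
  rw [mem_Ico]
  omega

theorem conjPart_eq_self_iff (hℓ : Antitone fun i : Fin μ => ℓ i) {j : ℕ} (hj : j < ℓ 0) :
    conjPart μ ℓ j = μ ↔ j < ℓ (μ - 1) := by
  cases μ with
  | zero => simpa [conjPart] using hj
  | succ n =>
    have hlast : n < conjPart (n + 1) ℓ j ↔ j < ℓ n := lt_conjPart_iff hℓ (Fin.last n)
    have hle := conjPart_le (μ := n + 1) (ℓ := ℓ) j
    rw [add_tsub_cancel_right]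
    omega

theorem apply_le_apply_zero (hℓ : Antitone fun i : Fin μ => ℓ i) (i : Fin μ) : ℓ i ≤ ℓ 0 :=
  hℓ (a := ⟨0, i.pos⟩) (Nat.zero_le _)

/-- Reading the Young diagram of `ℓ` by columns instead of by rows. -/
def transposeEquiv (hℓ : Antitone fun i : Fin μ => ℓ i) :
    (Σ j : Fin (ℓ 0), Fin (conjPart μ ℓ j)) ≃ (Σ i : Fin μ, Fin (ℓ i)) where
  toFun p := ⟨⟨p.2, p.2.isLt.trans_le (conjPart_le _)⟩,
    ⟨p.1, (lt_conjPart_iff hℓ ⟨p.2, _⟩).mp p.2.isLt⟩⟩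
  invFun p := ⟨⟨p.2, p.2.isLt.trans_le (apply_le_apply_zero hℓ p.1)⟩,
    ⟨p.1, (lt_conjPart_iff hℓ p.1).mpr p.2.isLt⟩⟩
  left_inv _ := rfl
  right_inv _ := rfl

theorem reindex_transposeEquiv_jordanNil (hℓ : Antitone fun i : Fin μ => ℓ i) :
    reindex (transposeEquiv hℓ) (transposeEquiv hℓ)
      (JordanNil fun j : Fin (ℓ 0) => conjPart μ ℓ j) = Nec μ ℓ := by
  ext ⟨i, j⟩ ⟨i', j'⟩
  simp only [reindex_apply, submatrix_apply, transposeEquiv, Equiv.coe_fn_symm_mk, JordanNil,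
    Nec, of_apply, Fin.mk.injEq]
  exact if_congr and_comm rfl rfl

theorem card_conjPart_eq (hℓ : Antitone fun i : Fin μ => ℓ i) {k : ℕ} (hk : 1 ≤ k)
    (hkμ : k < μ) : #{j : Fin (ℓ 0) | conjPart μ ℓ j = k} = ℓ (k - 1) - ℓ k := by
  simp_rw [conjPart_eq_iff hℓ hk hkμ]
  exact Fin.card_filter_val_mem_Ico (apply_le_apply_zero hℓ ⟨k - 1, by omega⟩)

theorem card_conjPart_eq_self (hℓ : Antitone fun i : Fin μ => ℓ i) :
    #{j : Fin (ℓ 0) | conjPart μ ℓ j = μ} = ℓ (μ - 1) := by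
  have hle : ℓ (μ - 1) ≤ ℓ 0 := by
    cases μ with
    | zero => rfl
    | succ n => exact apply_le_apply_zero hℓ (Fin.last n)
  simp_rw [conjPart_eq_self_iff hℓ (Fin.isLt _), Fin.card_filter_val_lt, min_eq_right hle]

end Conjugate

theorem stmt13_general (μ : ℕ) (ℓ : ℕ → ℕ)
    (hmono : ∀ i, i + 1 < μ → ℓ (i + 1) ≤ ℓ i) :
    ∃ (n : ℕ) (s : Fin n → ℕ)
      (e : (Σ i : Fin n, Fin (s i)) ≃ (Σ i : Fin μ, Fin (ℓ i))),
      Matrix.reindex e e (JordanNil s) = Nec μ ℓ ∧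
      (∀ k, 1 ≤ k → k ≤ μ - 1 →
        (Finset.univ.filter fun i => s i = k).card = ℓ (k - 1) - ℓ k) ∧
      (Finset.univ.filter fun i => s i = μ).card = ℓ (μ - 1) := by
  have hℓ := antitone_fin_val_of_succ_le hmono
  exact ⟨ℓ 0, fun j => conjPart μ ℓ j, transposeEquiv hℓ,
    reindex_transposeEquiv_jordanNil hℓ,
    fun k hk hkμ => card_conjPart_eq hℓ hk (by omega), card_conjPart_eq_self hℓ⟩

/-- N^{(Ec)} is permutation-similar to the Jordan matrix consisting of exactly
ℓ_i − ℓ_{i+1} nilpotent Jordan blocks of order i (i = 1,…,μ−1, 1-based) and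
ℓ_μ blocks of order μ. -/
theorem stmt13 (μ : ℕ) (hμ : 1 ≤ μ) (ℓ : ℕ → ℕ)
    (hpos : ∀ i, i < μ → 0 < ℓ i)
    (hmono : ∀ i, i + 1 < μ → ℓ (i + 1) ≤ ℓ i) :
    ∃ (n : ℕ) (s : Fin n → ℕ)
      (e : (Σ i : Fin n, Fin (s i)) ≃ (Σ i : Fin μ, Fin (ℓ i))),
      Matrix.reindex e e (JordanNil s) = Nec μ ℓ ∧
      (∀ k, 1 ≤ k → k ≤ μ - 1 →
        (Finset.univ.filter fun i => s i = k).card = ℓ (k - 1) - ℓ k) ∧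
      (Finset.univ.filter fun i => s i = μ).card = ℓ (μ - 1) :=
  stmt13_general μ ℓ hmono
end

section
/- Let ℓ_1 ≥ ⋯ ≥ ℓ_μ and let K ∈ ℝ^{m×m} be a block upper triangular matrix (in the partition ℓ_1,…,ℓ_μ) whose rows with index greater than m − κ coincide with those of the identity, for some κ ≥ 0. Let N^{(Ec)} be the elementary column-type matrix. Then the last κ + ℓ_{μ−1} rows of N^{(Ec)}·K coincide with the corresponding rows of N^{(Ec)}, provided κ ≥ m − Σ_{i=1}^{μ−1} ℓ_i. -/
/-!
Left multiplication by `Nec μ ℓ` moves row `(i + 1, a)` of `K` up to row `(i, a)`, and yields a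
zero row where block `i + 1` has no row `a`. Moving one block down adds `ℓ i` to the flat index,
and `ℓ i ≥ ℓ (μ - 2)` because `ℓ` is nonincreasing, so every row of `K` that gets moved into
the last `κ + ℓ (μ - 2)` rows lies among the last `κ` rows of `K`, which are rows of the identity.
-/

open Matrix

/-- The (0-based) flattened row/column index of a block position. -/
def posIdx (μ : ℕ) (ℓ : ℕ → ℕ) (p : Σ i : Fin μ, Fin (ℓ i)) : ℕ :=
  (∑ j ∈ Finset.range (p.1 : ℕ), ℓ j) + (p.2 : ℕ)

theorem antitoneOn_Iio_of_succ_le {α : Type*} [Preorder α] {f : ℕ → α} {n : ℕ}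
    (hf : ∀ i, i + 1 < n → f (i + 1) ≤ f i) : AntitoneOn f (Set.Iio n) := by
  intro i _ j hj hij
  induction hij with
  | refl => exact le_rfl
  | step _ ih => exact (hf _ hj).trans (ih (by simp only [Set.mem_Iio] at hj ⊢; omega))

namespace Nec

variable {μ : ℕ} {ℓ : ℕ → ℕ}

/-- The column of the unique `1` in row `p` of `Nec μ ℓ`. -/
def shift (p : Σ i : Fin μ, Fin (ℓ i)) (h₁ : (p.1 : ℕ) + 1 < μ) (h₂ : (p.2 : ℕ) < ℓ (p.1 + 1)) :
    Σ i : Fin μ, Fin (ℓ i) :=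
  ⟨⟨p.1 + 1, h₁⟩, ⟨p.2, h₂⟩⟩

theorem shift_eq_iff {p q : Σ i : Fin μ, Fin (ℓ i)} (h₁ : (p.1 : ℕ) + 1 < μ)
    (h₂ : (p.2 : ℕ) < ℓ (p.1 + 1)) :
    shift p h₁ h₂ = q ↔ (q.1 : ℕ) = p.1 + 1 ∧ (p.2 : ℕ) = q.2 := by
  obtain ⟨⟨i, hi⟩, ⟨a, ha⟩⟩ := q
  constructor
  · rintro ⟨⟩
    exact ⟨rfl, rfl⟩
  · rintro ⟨rfl, rfl⟩
    rfl

theorem apply_eq_one_apply_shift (p q : Σ i : Fin μ, Fin (ℓ i)) (h₁ : (p.1 : ℕ) + 1 < μ)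
    (h₂ : (p.2 : ℕ) < ℓ (p.1 + 1)) :
    Nec μ ℓ p q = (1 : Matrix _ _ ℝ) (shift p h₁ h₂) q := by
  simp only [Nec, of_apply, one_apply, shift_eq_iff]

theorem apply_eq_zero_of_not_shiftable (p q : Σ i : Fin μ, Fin (ℓ i))
    (hp : ¬((p.1 : ℕ) + 1 < μ ∧ (p.2 : ℕ) < ℓ (p.1 + 1))) : Nec μ ℓ p q = 0 := by
  refine if_neg fun ⟨hq₁, hq₂⟩ => hp ⟨hq₁ ▸ q.1.isLt, ?_⟩
  rw [hq₂, ← hq₁]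
  exact q.2.isLt

theorem mul_apply_of_shiftable (M : Matrix (Σ i : Fin μ, Fin (ℓ i)) (Σ i : Fin μ, Fin (ℓ i)) ℝ)
    (p q : Σ i : Fin μ, Fin (ℓ i)) (h₁ : (p.1 : ℕ) + 1 < μ) (h₂ : (p.2 : ℕ) < ℓ (p.1 + 1)) :
    (Nec μ ℓ * M) p q = M (shift p h₁ h₂) q := by
  simp only [mul_apply, apply_eq_one_apply_shift p _ h₁ h₂, one_apply, ite_mul, one_mul,
    zero_mul, Finset.sum_ite_eq, Finset.mem_univ, if_true]

theorem posIdx_shift (p : Σ i : Fin μ, Fin (ℓ i)) (h₁ : (p.1 : ℕ) + 1 < μ)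
    (h₂ : (p.2 : ℕ) < ℓ (p.1 + 1)) :
    posIdx μ ℓ (shift p h₁ h₂) = posIdx μ ℓ p + ℓ p.1 := by
  simp only [posIdx, shift, Finset.sum_range_succ]
  ring

theorem mul_apply_eq_apply_of_shift_row_eq_one
    {M : Matrix (Σ i : Fin μ, Fin (ℓ i)) (Σ i : Fin μ, Fin (ℓ i)) ℝ}
    {p : Σ i : Fin μ, Fin (ℓ i)}
    (hM : ∀ h₁ h₂ q, M (shift p h₁ h₂) q = (1 : Matrix _ _ ℝ) (shift p h₁ h₂) q)
    (q : Σ i : Fin μ, Fin (ℓ i)) :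
    (Nec μ ℓ * M) p q = Nec μ ℓ p q := by
  by_cases hp : (p.1 : ℕ) + 1 < μ ∧ (p.2 : ℕ) < ℓ (p.1 + 1)
  · obtain ⟨h₁, h₂⟩ := hp
    rw [mul_apply_of_shiftable M p q h₁ h₂, hM, apply_eq_one_apply_shift]
  · rw [apply_eq_zero_of_not_shiftable p q hp, mul_apply,
      Finset.sum_eq_zero fun s _ => by rw [apply_eq_zero_of_not_shiftable p s hp, zero_mul]]

end Nec

theorem stmt15_general (μ : ℕ) (ℓ : ℕ → ℕ)
    (hmono : ∀ i, i + 1 < μ → ℓ (i + 1) ≤ ℓ i)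
    (κ : ℕ)
    (K : Matrix (Σ i : Fin μ, Fin (ℓ i)) (Σ i : Fin μ, Fin (ℓ i)) ℝ)
    (hKrows : ∀ p q : Σ i : Fin μ, Fin (ℓ i),
      (∑ j ∈ Finset.range μ, ℓ j) - κ ≤ posIdx μ ℓ p →
      K p q = (1 : Matrix (Σ i : Fin μ, Fin (ℓ i)) (Σ i : Fin μ, Fin (ℓ i)) ℝ) p q) :
    ∀ p q : Σ i : Fin μ, Fin (ℓ i),
      (∑ j ∈ Finset.range μ, ℓ j) - (κ + ℓ (μ - 2)) ≤ posIdx μ ℓ p →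
      (Nec μ ℓ * K) p q = Nec μ ℓ p q := by
  intro p q hp
  refine Nec.mul_apply_eq_apply_of_shift_row_eq_one (fun h₁ h₂ q => hKrows _ q ?_) q
  have hℓ : ℓ (μ - 2) ≤ ℓ p.1 :=
    antitoneOn_Iio_of_succ_le hmono (Set.mem_Iio.2 (by omega)) (Set.mem_Iio.2 (by omega))
      (by omega)
  rw [Nec.posIdx_shift]
  omega

/-- If K is block upper triangular and its last κ rows coincide with those of
the identity, and κ ≥ m − Σ_{i=1}^{μ−1} ℓ_i, then the last κ + ℓ_{μ−1} rows
of N^{(Ec)}·K coincide with the corresponding rows of N^{(Ec)}. -/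
theorem stmt15 (μ : ℕ) (hμ : 2 ≤ μ) (ℓ : ℕ → ℕ)
    (hpos : ∀ i, i < μ → 0 < ℓ i)
    (hmono : ∀ i, i + 1 < μ → ℓ (i + 1) ≤ ℓ i)
    (κ : ℕ)
    (K : Matrix (Σ i : Fin μ, Fin (ℓ i)) (Σ i : Fin μ, Fin (ℓ i)) ℝ)
    (hKblock : ∀ p q : Σ i : Fin μ, Fin (ℓ i), (q.1 : ℕ) < (p.1 : ℕ) → K p q = 0)
    (hKrows : ∀ p q : Σ i : Fin μ, Fin (ℓ i),
      (∑ j ∈ Finset.range μ, ℓ j) - κ ≤ posIdx μ ℓ p →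
      K p q = (1 : Matrix (Σ i : Fin μ, Fin (ℓ i)) (Σ i : Fin μ, Fin (ℓ i)) ℝ) p q)
    (hκ : (∑ j ∈ Finset.range μ, ℓ j) - (∑ j ∈ Finset.range (μ - 1), ℓ j) ≤ κ) :
    ∀ p q : Σ i : Fin μ, Fin (ℓ i),
      (∑ j ∈ Finset.range μ, ℓ j) - (κ + ℓ (μ - 2)) ≤ posIdx μ ℓ p →
      (Nec μ ℓ * K) p q = Nec μ ℓ p q :=
  stmt15_general μ ℓ hmono κ K hKrows
end
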